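/- arXiv:2502.16080 — 2 statements merged into one kernel-verified Lean document; each statement's English description precedes it below -/
import Mathlib

section
/- Let f : Θ → ℝ be L-Lipschitz and ℓ-weakly convex (i.e., θ ↦ f(θ) + (ℓ/2)‖θ‖² is convex) on a convex set Θ ⊆ ℝ^d, and define the Moreau envelope f_λ(θ) = min_{θ'} { f(θ') + (1/(2λ))‖θ − θ'‖² } with λ = 1/(2ℓ). If ‖∇f_λ(θ̄)‖ ≤ ε, then the proximal point θ* = argmin_{θ'} { f(θ') + ℓ‖θ̄ − θ'‖² } satisfies ‖θ̄ − θ*‖ ≤ ε/(2ℓ) and there exists a subgradient h ∈ ∂f(θ*) with ‖h‖ ≤ ε. -/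
/-!
Weak convexity makes `y ↦ f y + ℓ‖θbar - y‖²` an `ℓ`-strongly convex function, so at its minimiser
`θstar` it grows at least like `(ℓ/2)‖y - θstar‖²`; expanding the square, this is exactly the
weak-subgradient inequality for `h = 2ℓ(θbar - θstar)`. The same quadratic minorant keeps every
proximal problem bounded below, so the envelope satisfies `fM θ ≤ f θstar + ℓ‖θ - θstar‖²` with
equality at `θbar`. Two differentiable functions touching at a point have equal gradients there,
so `∇fM(θbar) = 2ℓ(θbar - θstar)`, and both claims follow from `‖∇fM(θbar)‖ ≤ ε`.
-/

open scoped RealInnerProductSpace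
open InnerProductSpace Filter Topology

section

variable {E : Type*} [NormedAddCommGroup E] [InnerProductSpace ℝ E]

theorem StrongConvexOn.add_mul_norm_sub_sq_le_of_isMinOn {s : Set E} {m : ℝ} {φ : E → ℝ}
    (hφ : StrongConvexOn s m φ) {x y : E} (hx : x ∈ s) (hy : y ∈ s) (hmin : IsMinOn φ s x) :
    φ x + m / 2 * ‖y - x‖ ^ 2 ≤ φ y := by
  set c := m / 2 * ‖y - x‖ ^ 2 with hc
  have hsegment : ∀ t ∈ Set.Ioo (0 : ℝ) 1, φ x ≤ φ y - (1 - t) * c := by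
    rintro t ⟨ht0, ht1⟩
    have hmid := hφ.2 hx hy (sub_nonneg.2 ht1.le) ht0.le (sub_add_cancel 1 t)
    have hle : φ x ≤ φ ((1 - t) • x + t • y) :=
      hmin (hφ.1 hx hy (sub_nonneg.2 ht1.le) ht0.le (sub_add_cancel 1 t))
    rw [norm_sub_rev] at hmid
    simp only [smul_eq_mul] at hmid
    have key : t * φ x ≤ t * (φ y - (1 - t) * c) := by rw [hc]; linarith
    exact le_of_mul_le_mul_left key ht0
  have hlim : Tendsto (fun t : ℝ => φ y - (1 - t) * c) (𝓝[>] 0) (𝓝 (φ y - (1 - 0) * c)) :=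
    ((continuous_const.sub ((continuous_const.sub continuous_id).mul continuous_const)).tendsto
      0).mono_left nhdsWithin_le_nhds
  have := ge_of_tendsto hlim (eventually_of_mem (Ioo_mem_nhdsGT one_pos) hsegment)
  linarith

theorem ConvexOn.strongConvexOn_add_mul_norm_sub_sq {s : Set E} (hs : Convex ℝ s) {f : E → ℝ}
    {ℓ : ℝ} (hf : ConvexOn ℝ s fun y => f y + ℓ / 2 * ‖y‖ ^ 2) (μ : ℝ) (z : E) :
    StrongConvexOn s (2 * μ - ℓ) fun y => f y + μ * ‖z - y‖ ^ 2 := by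
  rw [strongConvexOn_iff_convex]
  refine (hf.add (((innerSL ℝ ((-2 * μ) • z)).toLinearMap.convexOn hs).add_const
    (μ * ‖z‖ ^ 2))).congr fun y _ => ?_
  simp only [Pi.add_apply, ContinuousLinearMap.coe_coe, innerSL_apply_apply,
    real_inner_smul_left]
  rw [norm_sub_sq_real]
  ring

theorem ConvexOn.le_of_isMinOn_add_mul_norm_sub_sq {s : Set E} (hs : Convex ℝ s) {f : E → ℝ}
    {ℓ μ : ℝ} (hf : ConvexOn ℝ s fun y => f y + ℓ / 2 * ‖y‖ ^ 2) {z x : E} (hx : x ∈ s)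
    (hmin : IsMinOn (fun y => f y + μ * ‖z - y‖ ^ 2) s x) :
    ∀ y ∈ s, f x + ⟪(2 * μ) • (z - x), y - x⟫ - ℓ / 2 * ‖y - x‖ ^ 2 ≤ f y := by
  intro y hy
  have hgrowth := (hf.strongConvexOn_add_mul_norm_sub_sq hs μ z).add_mul_norm_sub_sq_le_of_isMinOn
    hx hy hmin
  have hexpand : ‖z - y‖ ^ 2 = ‖z - x‖ ^ 2 - 2 * ⟪z - x, y - x⟫ + ‖y - x‖ ^ 2 := by
    rw [← norm_sub_sq_real, sub_sub_sub_cancel_right]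
  rw [hexpand] at hgrowth
  rw [real_inner_smul_left]
  linarith

theorem bddBelow_image_add_mul_norm_sub_sq_of_minorant {s : Set E} {f : E → ℝ} {ℓ μ : ℝ}
    (hμ : ℓ < 2 * μ) {x h : E} (hminor : ∀ y ∈ s, f x + ⟪h, y - x⟫ - ℓ / 2 * ‖y - x‖ ^ 2 ≤ f y)
    (θ : E) : BddBelow ((fun y => f y + μ * ‖θ - y‖ ^ 2) '' s) := by
  have ha : 0 < μ - ℓ / 2 := by linarith
  set b := ‖h - (2 * μ) • (θ - x)‖
  refine ⟨f x + μ * ‖θ - x‖ ^ 2 - b ^ 2 / (4 * (μ - ℓ / 2)), ?_⟩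
  rintro _ ⟨y, hy, rfl⟩
  have hexpand : ‖θ - y‖ ^ 2 = ‖θ - x‖ ^ 2 - 2 * ⟪θ - x, y - x⟫ + ‖y - x‖ ^ 2 := by
    rw [← norm_sub_sq_real, sub_sub_sub_cancel_right]
  have hcs : -(b * ‖y - x‖) ≤ ⟪h, y - x⟫ - 2 * μ * ⟪θ - x, y - x⟫ := by
    rw [← real_inner_smul_left, ← inner_sub_left]
    exact neg_le_of_abs_le (abs_real_inner_le_norm _ _)
  have hquad : b * ‖y - x‖ - (μ - ℓ / 2) * ‖y - x‖ ^ 2 ≤ b ^ 2 / (4 * (μ - ℓ / 2)) := by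
    rw [le_div_iff₀ (by positivity)]
    nlinarith [sq_nonneg (2 * (μ - ℓ / 2) * ‖y - x‖ - b)]
  have hfy := hminor y hy
  show _ ≤ f y + μ * ‖θ - y‖ ^ 2
  rw [hexpand]
  linarith

theorem HasGradientAt.eq_of_le_of_eq [CompleteSpace E] {u v : E → ℝ} {x g g' : E}
    (hu : HasGradientAt u g x) (hv : HasGradientAt v g' x) (hle : ∀ᶠ y in 𝓝 x, u y ≤ v y)
    (heq : u x = v x) : g = g' := by
  have hmin : IsLocalMin (fun y => v y - u y) x := by
    filter_upwards [hle] with y hy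
    rw [heq, sub_self]
    linarith
  have hzero := hmin.hasFDerivAt_eq_zero (hv.hasFDerivAt.sub hu.hasFDerivAt)
  rw [← map_sub, LinearIsometryEquiv.map_eq_zero_iff] at hzero
  exact (sub_eq_zero.1 hzero).symm

theorem hasGradientAt_const_add_mul_norm_sub_sq [CompleteSpace E] (c μ : ℝ) (a x : E) :
    HasGradientAt (fun y => c + μ * ‖y - a‖ ^ 2) ((2 * μ) • (x - a)) x := by
  rw [hasGradientAt_iff_hasFDerivAt]
  refine ((((hasFDerivAt_id x).sub_const a).norm_sq.const_mul μ).const_add c).congr_fderiv ?_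
  ext v
  simp only [id_eq, ContinuousLinearMap.comp_id, smul_apply,
    coe_innerSL_apply, nsmul_eq_mul, smul_eq_mul, map_smul, toDual_apply_apply]
  ring

end

theorem stmt_6_general {d : ℕ} (Θs : Set (EuclideanSpace ℝ (Fin d)))
    (hΘconv : Convex ℝ Θs)
    (f : EuclideanSpace ℝ (Fin d) → ℝ) (ℓ ε : ℝ) (hℓ : 0 < ℓ)
    (hwc : ConvexOn ℝ Θs (fun θ => f θ + (ℓ / 2) * ‖θ‖ ^ 2))
    (fM : EuclideanSpace ℝ (Fin d) → ℝ)
    (hfM : ∀ θ, fM θ = sInf ((fun θ' => f θ' + ℓ * ‖θ - θ'‖ ^ 2) '' Θs))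
    (θbar θstar : EuclideanSpace ℝ (Fin d)) (hθstar : θstar ∈ Θs)
    (hprox : IsLeast ((fun θ' => f θ' + ℓ * ‖θbar - θ'‖ ^ 2) '' Θs)
      (f θstar + ℓ * ‖θbar - θstar‖ ^ 2))
    (g : EuclideanSpace ℝ (Fin d)) (hgrad : HasGradientAt fM g θbar) (hg : ‖g‖ ≤ ε) :
    ‖θbar - θstar‖ ≤ ε / (2 * ℓ) ∧
      ∃ h : EuclideanSpace ℝ (Fin d),
        (∀ y ∈ Θs, f θstar + ⟪h, y - θstar⟫ - (ℓ / 2) * ‖y - θstar‖ ^ 2 ≤ f y) ∧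
        ‖h‖ ≤ ε := by
  have hmin : IsMinOn (fun y => f y + ℓ * ‖θbar - y‖ ^ 2) Θs θstar :=
    fun y hy => hprox.2 ⟨y, hy, rfl⟩
  have hminor := hwc.le_of_isMinOn_add_mul_norm_sub_sq hΘconv hθstar hmin
  have hle : ∀ θ, fM θ ≤ f θstar + ℓ * ‖θ - θstar‖ ^ 2 := fun θ =>
    (hfM θ).trans_le <| csInf_le (bddBelow_image_add_mul_norm_sub_sq_of_minorant (by linarith)
      hminor θ) ⟨θstar, hθstar, rfl⟩
  have hgeq : g = (2 * ℓ) • (θbar - θstar) :=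
    hgrad.eq_of_le_of_eq (hasGradientAt_const_add_mul_norm_sub_sq _ _ _ _)
      (Eventually.of_forall hle) ((hfM θbar).trans hprox.csInf_eq)
  have hnorm : ‖g‖ = 2 * ℓ * ‖θbar - θstar‖ := by
    rw [hgeq, norm_smul, Real.norm_of_nonneg (by positivity)]
  refine ⟨by rw [le_div_iff₀ (by positivity)]; linarith, g, ?_, hg⟩
  rw [hgeq]
  exact hminor

/-- Lin–Jin–Jordan style lemma. If `f` is `L`-Lipschitz and `ℓ`-weakly
convex on a closed convex set `Θs`, `fM` is its Moreau envelope with parameter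
`λ = 1/(2ℓ)`, `θstar` is the proximal point at `θbar`, and the gradient of `fM` at
`θbar` has norm at most `ε`, then `‖θbar - θstar‖ ≤ ε/(2ℓ)` and there is a subgradient
`h` of the `ℓ`-weakly convex `f` at `θstar` with `‖h‖ ≤ ε`. -/
theorem stmt_6 {d : ℕ} (Θs : Set (EuclideanSpace ℝ (Fin d)))
    (hΘconv : Convex ℝ Θs) (hΘcl : IsClosed Θs) (hΘne : Θs.Nonempty)
    (f : EuclideanSpace ℝ (Fin d) → ℝ) (L ℓ ε : ℝ) (hℓ : 0 < ℓ) (hε : 0 ≤ ε)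
    (hLip : LipschitzOnWith (Real.toNNReal L) f Θs)
    (hwc : ConvexOn ℝ Θs (fun θ => f θ + (ℓ / 2) * ‖θ‖ ^ 2))
    (fM : EuclideanSpace ℝ (Fin d) → ℝ)
    (hfM : ∀ θ, fM θ = sInf ((fun θ' => f θ' + ℓ * ‖θ - θ'‖ ^ 2) '' Θs))
    (θbar θstar : EuclideanSpace ℝ (Fin d)) (hθbar : θbar ∈ Θs) (hθstar : θstar ∈ Θs)
    (hprox : IsLeast ((fun θ' => f θ' + ℓ * ‖θbar - θ'‖ ^ 2) '' Θs)
      (f θstar + ℓ * ‖θbar - θstar‖ ^ 2))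
    (g : EuclideanSpace ℝ (Fin d)) (hgrad : HasGradientAt fM g θbar) (hg : ‖g‖ ≤ ε) :
    ‖θbar - θstar‖ ≤ ε / (2 * ℓ) ∧
      ∃ h : EuclideanSpace ℝ (Fin d),
        (∀ y ∈ Θs, f θstar + ⟪h, y - θstar⟫ - (ℓ / 2) * ‖y - θstar‖ ^ 2 ≤ f y) ∧
        ‖h‖ ≤ ε :=
  stmt_6_general Θs hΘconv f ℓ ε hℓ hwc fM hfM θbar θstar hθstar hprox g hgrad hg
end

section
/- In an infinite-horizon discounted Markov pseudo-game, let π* be a Markov policy profile such that for every player i and every state s, the action π*_i(s) maximizes a_i ↦ Q_i^{π*}(s, a_i, π*_{-i}(s)) over the feasible set X_i(s, π*_{-i}(s)), where Q_i^{π*}(s, a) = r_i(s, a) + γ E_{s' ∼ P(·|s,a)}[V_i^{π*}(s')]. Then for every player i, every feasible (possibly history-dependent) deviation π_i ∈ F_i(π*_{-i}), and every state s, V_i^{π*}(s) ≥ V_i^{(π_i, π*_{-i})}(s); i.e., greedy optimality with respect to one's own action-value function implies that π* is a generalized Markov perfect equilibrium. -/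
open MeasureTheory Filter Topology

/-!
Let `d h := W h - V i h.2` be the advantage of the deviation `σ` over `πstar` at the history `h`.
By the Bellman recursion for `W` and greedy optimality of `πstar`, `d ≤ c` everywhere implies
`d ≤ γ c` everywhere; starting from the bound `d ≤ 2 Mb` this gives `d ≤ γⁿ (2 Mb)` for all `n`,
hence `d ≤ 0`.
-/

theorem le_zero_of_forall_le_imp_le_mul {H : Type*} {f : H → ℝ} {γ C : ℝ}
    (hγ₀ : 0 ≤ γ) (hγ₁ : γ < 1) (hbound : ∀ h, f h ≤ C)
    (hstep : ∀ c, (∀ h, f h ≤ c) → ∀ h, f h ≤ γ * c) (h : H) : f h ≤ 0 := by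
  have hpow : ∀ n : ℕ, ∀ h, f h ≤ γ ^ n * C := by
    intro n
    induction n with
    | zero => simpa using hbound
    | succ n ih => simpa [pow_succ', mul_assoc] using hstep _ ih
  have hlim : Tendsto (fun n : ℕ => γ ^ n * C) atTop (𝓝 0) := by
    simpa using (tendsto_pow_atTop_nhds_zero_of_lt_one hγ₀ hγ₁).mul_const C
  exact ge_of_tendsto' hlim fun n => hpow n h

theorem integral_le_integral_add_of_le_add {S : Type*} [MeasurableSpace S] {μ : Measure S}
    [IsProbabilityMeasure μ] {f g : S → ℝ} (hf : Integrable f μ) (hg : Integrable g μ) {c : ℝ}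
    (hfg : ∀ s, f s ≤ g s + c) : ∫ s, f s ∂μ ≤ ∫ s, g s ∂μ + c := by
  calc ∫ s, f s ∂μ ≤ ∫ s, (g s + c) ∂μ := integral_mono hf (hg.add (integrable_const c)) hfg
    _ = ∫ s, g s ∂μ + c := by simp [integral_add hg (integrable_const c)]

theorem sub_le_mul_of_bellman {S : Type*} [MeasurableSpace S] {μ : Measure S}
    [IsProbabilityMeasure μ] {f g : S → ℝ} (hf : Integrable f μ) (hg : Integrable g μ)
    {γ c ρ x y : ℝ} (hγ : 0 ≤ γ) (hfg : ∀ s, f s ≤ g s + c)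
    (hx : x = ρ + γ * ∫ s, f s ∂μ) (hy : ρ + γ * ∫ s, g s ∂μ ≤ y) : x - y ≤ γ * c := by
  have := mul_le_mul_of_nonneg_left (integral_le_integral_add_of_le_add hf hg hfg) hγ
  linarith

theorem integrable_of_abs_le {S : Type*} [MeasurableSpace S] {μ : Measure S}
    [IsFiniteMeasure μ] {f : S → ℝ} (hf : Measurable f) {M : ℝ} (hM : ∀ s, |f s| ≤ M) :
    Integrable f μ :=
  .of_bound hf.aestronglyMeasurable M (ae_of_all _ hM)

theorem stmt_10_general {S : Type*} [MeasurableSpace S] {ι : Type*} [DecidableEq ι]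
    {A : ι → Type*}
    (X : (i : ι) → S → (∀ j, A j) → Set (A i))
    (r : ι → S → (∀ j, A j) → ℝ)
    (P : S → (∀ j, A j) → Measure S)
    (hP : ∀ s a, IsProbabilityMeasure (P s a))
    (γ : ℝ) (hγ : γ ∈ Set.Ioo (0:ℝ) 1)
    (πstar : (i : ι) → S → A i)
    (V : ι → S → ℝ)
    (Mb : ℝ) (hVb : ∀ i s, |V i s| ≤ Mb)
    (hVm : ∀ i, Measurable (V i))
    (hgreedy : ∀ i s, ∀ ai ∈ X i s (fun j => πstar j s),
      r i s (Function.update (fun j => πstar j s) i ai)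
        + γ * ∫ s', V i s' ∂(P s (Function.update (fun j => πstar j s) i ai))
      ≤ V i s)
    (i : ι)
    (σ : List (S × (∀ j, A j)) × S → A i)
    (hσ : ∀ h : List (S × (∀ j, A j)) × S, σ h ∈ X i h.2 (fun j => πstar j h.2))
    (W : List (S × (∀ j, A j)) × S → ℝ)
    (hWb : ∀ h, |W h| ≤ Mb)
    (hWm : ∀ l : List (S × (∀ j, A j)), Measurable fun s => W (l, s))
    (hW : ∀ h : List (S × (∀ j, A j)) × S,
      W h = r i h.2 (Function.update (fun j => πstar j h.2) i (σ h))
        + γ * ∫ s',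
            W (h.1 ++ [(h.2, Function.update (fun j => πstar j h.2) i (σ h))], s')
          ∂(P h.2 (Function.update (fun j => πstar j h.2) i (σ h)))) :
    ∀ s, W ([], s) ≤ V i s := by
  intro s
  have hbound : ∀ h : List (S × (∀ j, A j)) × S, W h - V i h.2 ≤ 2 * Mb := fun h => by
    linarith [(abs_le.1 (hWb h)).2, (abs_le.1 (hVb i h.2)).1]
  have hstep : ∀ c, (∀ h : List (S × (∀ j, A j)) × S, W h - V i h.2 ≤ c) →
      ∀ h : List (S × (∀ j, A j)) × S, W h - V i h.2 ≤ γ * c := by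
    intro c hc h
    have := hP h.2 (Function.update (fun j => πstar j h.2) i (σ h))
    exact sub_le_mul_of_bellman (integrable_of_abs_le (hWm _) fun s' => hWb _)
      (integrable_of_abs_le (hVm i) (hVb i)) hγ.1.le
      (fun s' => sub_le_iff_le_add'.1 (hc (_, s'))) (hW h) (hgreedy i h.2 (σ h) (hσ h))
  exact sub_nonpos.1 (le_zero_of_forall_le_imp_le_mul hγ.1.le hγ.2 hbound hstep ([], s))

/-- In an infinite-horizon discounted Markov pseudo-game, if the Markov
profile `πstar` is feasible and greedy with respect to its own action-value functions
(`Q_i(s,a) = r_i(s,a) + γ E_{s'∼P(s,a)}[V_i(s')]`, where `V_i` is the bounded value of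
`πstar`), then for every player `i`, every feasible history-dependent deviation `σ`
(whose bounded value function `W` satisfies the corresponding Bellman recursion along
histories), and every state `s`, `V_i(s) ≥ W([], s)`: greedy optimality implies
generalized Markov perfection. -/
theorem stmt_10 {S : Type*} [MeasurableSpace S] {ι : Type*} [Fintype ι] [DecidableEq ι]
    {A : ι → Type*}
    (X : (i : ι) → S → (∀ j, A j) → Set (A i))
    (r : ι → S → (∀ j, A j) → ℝ)
    (P : S → (∀ j, A j) → Measure S)
    (hP : ∀ s a, IsProbabilityMeasure (P s a))
    (γ : ℝ) (hγ : γ ∈ Set.Ioo (0:ℝ) 1)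
    (πstar : (i : ι) → S → A i)
    (V : ι → S → ℝ)
    (Mb : ℝ) (hVb : ∀ i s, |V i s| ≤ Mb) (hrb : ∀ i s a, |r i s a| ≤ Mb)
    (hVm : ∀ i, Measurable (V i))
    (hfeas : ∀ i s, πstar i s ∈ X i s (fun j => πstar j s))
    (hV : ∀ i s, V i s =
      r i s (fun j => πstar j s) + γ * ∫ s', V i s' ∂(P s (fun j => πstar j s)))
    (hgreedy : ∀ i s, ∀ ai ∈ X i s (fun j => πstar j s),
      r i s (Function.update (fun j => πstar j s) i ai)
        + γ * ∫ s', V i s' ∂(P s (Function.update (fun j => πstar j s) i ai))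
      ≤ V i s)
    (i : ι)
    (σ : List (S × (∀ j, A j)) × S → A i)
    (hσ : ∀ h : List (S × (∀ j, A j)) × S, σ h ∈ X i h.2 (fun j => πstar j h.2))
    (W : List (S × (∀ j, A j)) × S → ℝ)
    (hWb : ∀ h, |W h| ≤ Mb)
    (hWm : ∀ l : List (S × (∀ j, A j)), Measurable fun s => W (l, s))
    (hW : ∀ h : List (S × (∀ j, A j)) × S,
      W h = r i h.2 (Function.update (fun j => πstar j h.2) i (σ h))
        + γ * ∫ s',
            W (h.1 ++ [(h.2, Function.update (fun j => πstar j h.2) i (σ h))], s')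
          ∂(P h.2 (Function.update (fun j => πstar j h.2) i (σ h)))) :
    ∀ s, W ([], s) ≤ V i s :=
  stmt_10_general X r P hP γ hγ πstar V Mb hVb hVm hgreedy i σ hσ W hWb hWm hW
end
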